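/- arXiv:1303.2279 — 5 statements merged into one kernel-verified Lean document; each statement's English description precedes it below -/
import Mathlib

section
/- For positive constants c_1,…,c_N and positive reals m, M, C with m ≤ c_k ≤ M for all k, ∏_{k=1}^N c_k ≥ C, and m^N ≤ C ≤ M^N, let v = min{ j ∈ ℤ : M^j · m^{N-j} ≥ C }. Then ∑_{k=1}^N 1/c_k² ≤ (N−v)/m² + (v−1)/M² + (m^{N−v} M^{v−1} / C)². -/
/-! A pair of coordinates `a > m`, `b < M` can be replaced by a pair with the same product, one of
them at an endpoint of `[m, M]`, and the other one farther out: since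
`1/a² + 1/b² = (a² + b²)/(ab)²`, spreading a pair apart at fixed product does not decrease the sum.
Repeating this, it suffices to bound vectors made of one free coordinate `x`, `q` copies of `M` and
`N - 1 - q` copies of `m`. Then `C ≤ x M^q m^(N-1-q) ≤ M^(q+1) m^(N-1-q)`, so minimality of `v`
gives `v ≤ q + 1`. If `v = q + 1` the product bound reads `1/x ≤ m^(N-v) M^(v-1)/C`, which is the
claim; if `v ≤ q`, trading the `q - v` surplus copies of `1/M²` for `1/m²` and using
`1/M ≤ m^(N-v) M^(v-1)/C` (membership of `v`) gives it. -/

open Finset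

theorem sq_add_sq_le_of_mul_eq {a b a' b' : ℝ} (ha : 0 < a) (hb : 0 < b) (ha' : 0 < a')
    (hprod : a' * b' = a * b) (ha'a : a' ≤ a) (ha'b : a' ≤ b) :
    a ^ 2 + b ^ 2 ≤ a' ^ 2 + b' ^ 2 := by
  have hb'a : a ≤ b' := le_of_mul_le_mul_left (by nlinarith) ha'
  have hb'b : b ≤ b' := le_of_mul_le_mul_left (by nlinarith) ha'
  nlinarith [mul_nonneg (add_nonneg (sub_nonneg.2 hb'a) (sub_nonneg.2 ha'b))
    (add_nonneg (sub_nonneg.2 hb'b) (sub_nonneg.2 ha'a))]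

theorem inv_sq_add_inv_sq_le_of_mul_eq {a b a' b' : ℝ} (ha : 0 < a) (hb : 0 < b) (ha' : 0 < a')
    (hprod : a' * b' = a * b) (ha'a : a' ≤ a) (ha'b : a' ≤ b) :
    1 / a ^ 2 + 1 / b ^ 2 ≤ 1 / a' ^ 2 + 1 / b' ^ 2 := by
  have hb' : 0 < b' := pos_of_mul_pos_right (hprod ▸ mul_pos ha hb) ha'.le
  have key (x y : ℝ) (hx : 0 < x) (hy : 0 < y) :
      1 / x ^ 2 + 1 / y ^ 2 = (x ^ 2 + y ^ 2) / (x * y) ^ 2 := by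
    field_simp
    ring
  rw [key a b ha hb, key a' b' ha' hb', hprod]
  exact div_le_div_of_nonneg_right (sq_add_sq_le_of_mul_eq ha hb ha' hprod ha'a ha'b)
    (by positivity)

theorem exists_extremal_pair {m M a b : ℝ} (hm : 0 < m) (ha : m < a) (haM : a ≤ M) (hbm : m ≤ b)
    (hb : b < M) :
    ∃ a' b', (m ≤ a' ∧ a' ≤ M) ∧ (m ≤ b' ∧ b' ≤ M) ∧ a' * b' = a * b ∧
      1 / a ^ 2 + 1 / b ^ 2 ≤ 1 / a' ^ 2 + 1 / b' ^ 2 ∧ (a' = m ∨ b' = M) := by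
  have ha0 : 0 < a := hm.trans ha
  have hb0 : 0 < b := hm.trans_le hbm
  have hM : 0 < M := ha0.trans_le haM
  rcases le_total (a * b) (m * M) with hab | hab
  · refine ⟨m, a * b / m, ⟨le_rfl, by linarith⟩, ⟨?_, ?_⟩, by field_simp,
      inv_sq_add_inv_sq_le_of_mul_eq ha0 hb0 hm (by field_simp) ha.le hbm, Or.inl rfl⟩
    · rw [le_div_iff₀ hm]; nlinarith
    · rw [div_le_iff₀ hm]; linarith
  · refine ⟨a * b / M, M, ⟨?_, ?_⟩, ⟨by linarith, le_rfl⟩, by field_simp,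
      inv_sq_add_inv_sq_le_of_mul_eq ha0 hb0 (by positivity) (by field_simp) ?_ ?_, Or.inr rfl⟩
    · rw [le_div_iff₀ hM]; linarith
    · rw [div_le_iff₀ hM]; nlinarith
    · rw [div_le_iff₀ hM]; nlinarith
    · rw [div_le_iff₀ hM]; nlinarith

@[to_additive]
theorem Finset.prod_univ_eq_mul_mul_prod_compl_pair {ι α : Type*} [Fintype ι] [DecidableEq ι]
    [CommMonoid α] (f : ι → α) {i j : ι} (hij : i ≠ j) :
    ∏ k, f k = f i * f j * ∏ k ∈ {i, j}ᶜ, f k := by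
  rw [← prod_mul_prod_compl {i, j}, prod_pair hij]

@[to_additive]
theorem Finset.prod_comp_eq_pow_mul_pow {ι α β : Type*} [CommMonoid β] {s : Finset ι}
    {c : ι → α} {a b : α} [DecidablePred (c · = b)] (f : α → β)
    (h : ∀ k ∈ s, c k = a ∨ c k = b) :
    ∏ k ∈ s, f (c k) = f b ^ #{k ∈ s | c k = b} * f a ^ #{k ∈ s | c k ≠ b} := by
  rw [← prod_filter_mul_prod_filter_not s (c · = b)]
  congr 1
  · rw [prod_congr rfl fun k hk => by rw [(mem_filter.1 hk).2], prod_const]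
  · rw [prod_congr rfl fun k hk => by
      rw [(h k (mem_filter.1 hk).1).resolve_right (mem_filter.1 hk).2], prod_const]

theorem inv_sq_add_le_of_isLeast {N q p : ℕ} {m M C x : ℝ} (hm : 0 < m) (hmM : m ≤ M) (hC : 0 < C)
    (hx : m ≤ x) (hxM : x ≤ M) (hN : q + p + 1 = N) (hCx : C ≤ x * (M ^ q * m ^ p)) {v : ℤ}
    (hv : IsLeast {j : ℤ | C ≤ M ^ j * m ^ ((N : ℤ) - j)} v) :
    1 / x ^ 2 + (q * (1 / M ^ 2) + p * (1 / m ^ 2)) ≤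
      ((N : ℝ) - v) / m ^ 2 + ((v : ℝ) - 1) / M ^ 2 +
        (m ^ ((N : ℤ) - v) * M ^ (v - 1) / C) ^ 2 := by
  have hM : 0 < M := hm.trans_le hmM
  have hx0 : 0 < x := hm.trans_le hx
  have hp : (N : ℤ) - (q + 1) = p := by omega
  have hvq : v ≤ q + 1 := hv.2 <| by
    change C ≤ M ^ ((q : ℤ) + 1) * m ^ ((N : ℤ) - (q + 1))
    rw [hp, zpow_natCast, zpow_add_one₀ hM.ne', zpow_natCast]
    calc C ≤ x * (M ^ q * m ^ p) := hCx
      _ ≤ M * (M ^ q * m ^ p) := by gcongr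
      _ = _ := by ring
  have hNR : (N : ℝ) = q + p + 1 := by exact_mod_cast hN.symm
  set A := m ^ ((N : ℤ) - v) * M ^ (v - 1)
  rcases hvq.lt_or_eq with hvq | rfl
  · have hinvx : 1 / x ^ 2 ≤ 1 / m ^ 2 := one_div_le_one_div_of_le (by positivity) (by gcongr)
    have hinvM : 1 / M ^ 2 ≤ (A / C) ^ 2 := by
      have hAM : A * M = M ^ v * m ^ ((N : ℤ) - v) := by
        rw [mul_assoc, ← zpow_add_one₀ hM.ne', sub_add_cancel, mul_comm]
      rw [one_div, ← inv_pow]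
      gcongr
      rw [le_div_iff₀ hC, inv_mul_le_iff₀ hM, mul_comm, hAM]
      exact hv.1
    have hMm : 1 / M ^ 2 ≤ 1 / m ^ 2 := one_div_le_one_div_of_le (by positivity) (by gcongr)
    have hvq' : (v : ℝ) ≤ q := by exact_mod_cast Int.lt_add_one_iff.1 hvq
    have hgap : ((N : ℝ) - v) / m ^ 2 + ((v : ℝ) - 1) / M ^ 2 + (A / C) ^ 2 -
        (1 / x ^ 2 + (q * (1 / M ^ 2) + p * (1 / m ^ 2))) =
        (q - v) * (1 / m ^ 2 - 1 / M ^ 2) + (1 / m ^ 2 - 1 / x ^ 2) +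
          ((A / C) ^ 2 - 1 / M ^ 2) := by
      rw [hNR]; ring
    linarith [mul_nonneg (sub_nonneg.2 hvq') (sub_nonneg.2 hMm)]
  · have hA : A = m ^ p * M ^ q := by
      simp only [A, hp, add_sub_cancel_right, zpow_natCast]
    have hinvx : 1 / x ^ 2 ≤ (A / C) ^ 2 := by
      rw [one_div, ← inv_pow]
      gcongr
      rw [le_div_iff₀ hC, inv_mul_le_iff₀ hx0, hA, mul_comm (m ^ p)]
      exact hCx
    have hgap : ((N : ℝ) - (q + 1 : ℤ)) / m ^ 2 + (((q + 1 : ℤ) : ℝ) - 1) / M ^ 2 + (A / C) ^ 2 -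
        (1 / x ^ 2 + (q * (1 / M ^ 2) + p * (1 / m ^ 2))) = (A / C) ^ 2 - 1 / x ^ 2 := by
      rw [hNR]; push_cast; ring
    linarith

section Smoothing

variable {ι : Type*} [Fintype ι] {m M : ℝ}

noncomputable def interiorIndices (m M : ℝ) (c : ι → ℝ) : Finset ι := {k | m < c k ∧ c k < M}

theorem mem_interiorIndices {c : ι → ℝ} {k : ι} :
    k ∈ interiorIndices m M c ↔ m < c k ∧ c k < M := by
  simp [interiorIndices]

theorem exists_smoothing_step (hm : 0 < m) {c : ι → ℝ} (hc : ∀ k, m ≤ c k ∧ c k ≤ M) {i j : ι}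
    (hij : i ≠ j) (hi : i ∈ interiorIndices m M c) (hj : j ∈ interiorIndices m M c) :
    ∃ c' : ι → ℝ, (∀ k, m ≤ c' k ∧ c' k ≤ M) ∧ ∏ k, c' k = ∏ k, c k ∧
      ∑ k, 1 / c k ^ 2 ≤ ∑ k, 1 / c' k ^ 2 ∧ interiorIndices m M c' ⊂ interiorIndices m M c := by
  classical
  obtain ⟨a', b', ha', hb', hprod, hsum, hext⟩ := exists_extremal_pair hm
    (mem_interiorIndices.1 hi).1 (hc i).2 (hc j).1 (mem_interiorIndices.1 hj).2
  set c' := Function.update (Function.update c i a') j b'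
  have hc'i : c' i = a' := by simp [c', hij]
  have hc'j : c' j = b' := by simp [c']
  have hc'k : ∀ k ∈ ({i, j} : Finset ι)ᶜ, c' k = c k := by
    intro k hk
    simp only [mem_compl, mem_insert, mem_singleton, not_or] at hk
    simp [c', hk.1, hk.2]
  refine ⟨c', fun k => ?_, ?_, ?_, ?_⟩
  · rcases eq_or_ne k j with rfl | hkj
    · rwa [hc'j]
    rcases eq_or_ne k i with rfl | hki
    · rwa [hc'i]
    rw [hc'k k (by simp [hki, hkj])]
    exact hc k
  · rw [prod_univ_eq_mul_mul_prod_compl_pair _ hij, prod_univ_eq_mul_mul_prod_compl_pair c hij,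
      hc'i, hc'j, hprod, prod_congr rfl hc'k]
  · rw [sum_univ_eq_add_add_sum_compl_pair (fun k => 1 / c' k ^ 2) hij,
      sum_univ_eq_add_add_sum_compl_pair (fun k => 1 / c k ^ 2) hij, hc'i, hc'j,
      sum_congr rfl fun k hk => by rw [← hc'k k hk]]
    linarith
  · have hsub : interiorIndices m M c' ⊆ interiorIndices m M c := by
      intro k hk
      by_cases hkij : k ∈ ({i, j} : Finset ι)ᶜ
      · rw [mem_interiorIndices, ← hc'k k hkij]
        exact mem_interiorIndices.1 hk
      · simp only [mem_compl, mem_insert, mem_singleton, not_not] at hkij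
        rcases hkij with rfl | rfl <;> assumption
    rw [ssubset_iff_of_subset hsub]
    rcases hext with h | h
    · exact ⟨i, hi, fun hi' => (mem_interiorIndices.1 hi').1.ne' (hc'i.trans h)⟩
    · exact ⟨j, hj, fun hj' => (mem_interiorIndices.1 hj').2.ne (hc'j.trans h)⟩

theorem exists_extremal_le_sum_inv_sq [Nonempty ι] (hm : 0 < m) {c : ι → ℝ}
    (hc : ∀ k, m ≤ c k ∧ c k ≤ M) :
    ∃ c' : ι → ℝ, (∀ k, m ≤ c' k ∧ c' k ≤ M) ∧ ∏ k, c' k = ∏ k, c k ∧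
      ∑ k, 1 / c k ^ 2 ≤ ∑ k, 1 / c' k ^ 2 ∧ ∃ k₀, ∀ k ≠ k₀, c' k = m ∨ c' k = M := by
  induction hn : #(interiorIndices m M c) using Nat.strong_induction_on generalizing c with
  | _ n ih =>
  by_cases hpair : 1 < #(interiorIndices m M c)
  · obtain ⟨i, hi, j, hj, hij⟩ := one_lt_card.1 hpair
    obtain ⟨c', hc', hprod, hsum, hsub⟩ := exists_smoothing_step hm hc hij hi hj
    obtain ⟨c'', hc'', hprod', hsum', hext⟩ := ih _ (hn ▸ card_lt_card hsub) hc' rfl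
    exact ⟨c'', hc'', hprod'.trans hprod, hsum.trans hsum', hext⟩
  · obtain ⟨k₀, hk₀⟩ : ∃ k₀, ∀ k ∈ interiorIndices m M c, k = k₀ := by
      rcases (interiorIndices m M c).eq_empty_or_nonempty with he | ⟨k₀, hk₀⟩
      · exact ⟨Classical.arbitrary ι, by simp [he]⟩
      · exact ⟨k₀, fun k hk => card_le_one.1 (not_lt.1 hpair) k hk k₀ hk₀⟩
    refine ⟨c, hc, rfl, le_rfl, k₀, fun k hk => ?_⟩
    have hk' : ¬ (m < c k ∧ c k < M) := fun h => hk (hk₀ k (mem_interiorIndices.2 h))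
    rcases (hc k).1.eq_or_lt with h | h
    · exact Or.inl h.symm
    · exact Or.inr (le_antisymm (hc k).2 (not_lt.1 fun h' => hk' ⟨h, h'⟩))

end Smoothing

theorem sum_inv_sq_le_of_isLeast {N : ℕ} {c : Fin N → ℝ} {m M C : ℝ} (hm : 0 < m) (hC : 0 < C)
    (hc : ∀ k, m ≤ c k ∧ c k ≤ M) (hprod : C ≤ ∏ k, c k) {k₀ : Fin N}
    (hk₀ : ∀ k ≠ k₀, c k = m ∨ c k = M) {v : ℤ}
    (hv : IsLeast {j : ℤ | C ≤ M ^ j * m ^ ((N : ℤ) - j)} v) :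
    ∑ k, 1 / c k ^ 2 ≤
      ((N : ℝ) - v) / m ^ 2 + ((v : ℝ) - 1) / M ^ 2 +
        (m ^ ((N : ℤ) - v) * M ^ (v - 1) / C) ^ 2 := by
  have hs : ∀ k ∈ univ.erase k₀, c k = m ∨ c k = M := fun k hk => hk₀ k (ne_of_mem_erase hk)
  have hcard : #{k ∈ univ.erase k₀ | c k = M} + #{k ∈ univ.erase k₀ | c k ≠ M} + 1 = N := by
    rw [card_filter_add_card_filter_not, card_erase_of_mem (mem_univ _), card_univ,
      Fintype.card_fin]
    have := k₀.pos
    omega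
  have hprod' : ∏ k ∈ univ.erase k₀, c k =
      M ^ #{k ∈ univ.erase k₀ | c k = M} * m ^ #{k ∈ univ.erase k₀ | c k ≠ M} :=
    prod_comp_eq_pow_mul_pow id hs
  rw [← mul_prod_erase univ c (mem_univ k₀), hprod'] at hprod
  rw [← add_sum_erase univ _ (mem_univ k₀), sum_comp_eq_nsmul_add_nsmul (fun x => 1 / x ^ 2) hs,
    nsmul_eq_mul, nsmul_eq_mul]
  exact inv_sq_add_le_of_isLeast hm ((hc k₀).1.trans (hc k₀).2) hC (hc k₀).1 (hc k₀).2 hcard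
    hprod hv

theorem stmt_0_general (N : ℕ) (hN : 0 < N) (c : Fin N → ℝ) (m M C : ℝ)
    (hm : 0 < m) (hC : 0 < C)
    (hc : ∀ k, m ≤ c k ∧ c k ≤ M)
    (hprod : C ≤ ∏ k, c k)
    (v : ℤ)
    (hv : IsLeast {j : ℤ | C ≤ M ^ j * m ^ ((N : ℤ) - j)} v) :
    ∑ k, 1 / (c k) ^ 2 ≤
      ((N : ℝ) - v) / m ^ 2 + ((v : ℝ) - 1) / M ^ 2 +
        (m ^ ((N : ℤ) - v) * M ^ (v - 1) / C) ^ 2 := by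
  have : Nonempty (Fin N) := ⟨⟨0, hN⟩⟩
  obtain ⟨c', hc', hprod', hsum, k₀, hk₀⟩ := exists_extremal_le_sum_inv_sq hm hc
  exact hsum.trans (sum_inv_sq_le_of_isLeast hm hC hc' (hprod' ▸ hprod) hk₀ hv)

theorem stmt_0 (N : ℕ) (hN : 0 < N) (c : Fin N → ℝ) (m M C : ℝ)
    (hm : 0 < m) (hM : 0 < M) (hC : 0 < C)
    (hc : ∀ k, m ≤ c k ∧ c k ≤ M)
    (hprod : C ≤ ∏ k, c k)
    (hmC : m ^ N ≤ C) (hCM : C ≤ M ^ N)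
    (v : ℤ)
    (hv : IsLeast {j : ℤ | C ≤ M ^ j * m ^ ((N : ℤ) - j)} v) :
    ∑ k, 1 / (c k) ^ 2 ≤
      ((N : ℝ) - v) / m ^ 2 + ((v : ℝ) - 1) / M ^ 2 +
        (m ^ ((N : ℤ) - v) * M ^ (v - 1) / C) ^ 2 :=
  stmt_0_general N hN c m M C hm hC hc hprod v hv
end

section
/- Let p(z) = (z−a)∏_{k=1}^{n−1}(z−z_k) with p′(z) = n∏_{j=1}^{n−1}(z−ζ_j), and suppose z_k ≠ a for all k and ζ_j ≠ a for all j. Then ∑_{j=1}^{n−1} 1/(a−ζ_j) = 2·∑_{k=1}^{n−1} 1/(a−z_k). -/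
open Polynomial

lemma aux0 {ι : Type*} [DecidableEq ι] (s : Finset ι) (f : ι → ℂ) :
    derivative (∏ i ∈ s, (X - C (f i))) = ∑ i ∈ s, ∏ j ∈ s.erase i, (X - C (f j)) := by
  induction s using Finset.induction with
  | empty => simp
  | @insert a s ha ih =>
    rw [Finset.prod_insert ha, derivative_mul, ih, Finset.sum_insert ha,
      Finset.erase_insert ha]
    simp only [derivative_sub, derivative_X, derivative_C, sub_zero, one_mul]
    congr 1
    rw [Finset.mul_sum]
    refine Finset.sum_congr rfl fun i hi => ?_
    rw [Finset.erase_insert_of_ne (ne_of_mem_of_not_mem hi ha).symm,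
      Finset.prod_insert (fun h => ha (Finset.mem_of_mem_erase h))]

lemma aux_deriv_prod {m : ℕ} (a : ℂ) (r : Fin m → ℂ) (h : ∀ i, a - r i ≠ 0) :
    eval a (derivative (∏ i, (X - C (r i)))) =
      (∑ j, 1 / (a - r j)) * ∏ i, (a - r i) := by
  rw [aux0]
  simp only [eval_finset_sum, eval_prod, eval_sub, eval_X, eval_C, Finset.sum_mul]
  refine Finset.sum_congr rfl fun j _ => ?_
  rw [one_div, ← Finset.mul_prod_erase Finset.univ (fun i => a - r i) (Finset.mem_univ j),
    inv_mul_eq_div, mul_div_cancel_left₀ _ (h j)]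

theorem stmt_2 (n : ℕ) (hn : 2 ≤ n) (a : ℂ) (z ζ : Fin (n - 1) → ℂ)
    (p : Polynomial ℂ)
    (hp : p = (X - C a) * ∏ k, (X - C (z k)))
    (hp' : derivative p = C (n : ℂ) * ∏ j, (X - C (ζ j)))
    (hz : ∀ k, z k ≠ a) (hζ : ∀ j, ζ j ≠ a) :
    ∑ j, 1 / (a - ζ j) = 2 * ∑ k, 1 / (a - z k) := by
  have hzne : ∀ k, a - z k ≠ 0 := fun k => sub_ne_zero.mpr (fun e => hz k e.symm)
  have hζne : ∀ j, a - ζ j ≠ 0 := fun j => sub_ne_zero.mpr (fun e => hζ j e.symm)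
  have hPz : (∏ k, (a - z k)) ≠ 0 := Finset.prod_ne_zero_iff.mpr fun k _ => hzne k
  set q : Polynomial ℂ := ∏ k, (X - C (z k)) with hq
  have hqa : eval a q = ∏ k, (a - z k) := by simp [hq, eval_prod]
  have hdp : derivative p = q + (X - C a) * derivative q := by
    rw [hp, derivative_mul]
    simp only [derivative_sub, derivative_X, derivative_C, sub_zero, one_mul]
  -- p'(a) two ways
  have h1 : eval a (derivative p) = ∏ k, (a - z k) := by
    rw [hdp]; simp [hqa]
  have h1' : eval a (derivative p) = (n : ℂ) * ∏ j, (a - ζ j) := by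
    rw [hp']; simp [eval_prod]
  -- p''(a) two ways
  have h2 : eval a (derivative (derivative p)) =
      2 * ((∑ k, 1 / (a - z k)) * ∏ k, (a - z k)) := by
    rw [hdp, derivative_add, derivative_mul]
    simp only [derivative_sub, derivative_X, derivative_C, sub_zero, one_mul,
      eval_add, eval_mul, eval_sub, eval_X, eval_C, sub_self, zero_mul, add_zero]
    rw [hq, aux_deriv_prod a z hzne]
    ring
  have h2' : eval a (derivative (derivative p)) =
      (n : ℂ) * ((∑ j, 1 / (a - ζ j)) * ∏ j, (a - ζ j)) := by
    rw [hp', derivative_mul, derivative_C]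
    simp only [zero_mul, zero_add, eval_mul, eval_C]
    rw [aux_deriv_prod a ζ hζne]
  have hprod : (n : ℂ) * ∏ j, (a - ζ j) = ∏ k, (a - z k) := h1'.symm.trans h1
  have hmix : 2 * ((∑ k, 1 / (a - z k)) * ∏ k, (a - z k)) =
      (n : ℂ) * ((∑ j, 1 / (a - ζ j)) * ∏ j, (a - ζ j)) := h2.symm.trans h2'
  have key : (∑ j, 1 / (a - ζ j)) * ∏ k, (a - z k) =
      (2 * ∑ k, 1 / (a - z k)) * ∏ k, (a - z k) := by
    linear_combination (-(∑ j, 1 / (a - ζ j))) * hprod - hmix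
  exact mul_right_cancel₀ hPz key
end

section
/- For all real a ∈ (0.5195, 1] and x ∈ [0.4, 1], one has x² + (1−x²)(a²+x²)²/(9x²) ≤ 1. -/
theorem stmt_6 (a x : ℝ) (ha : 0.5195 < a) (ha1 : a ≤ 1) (hx : 0.4 ≤ x) (hx1 : x ≤ 1) :
    x ^ 2 + (1 - x ^ 2) * (a ^ 2 + x ^ 2) ^ 2 / (9 * x ^ 2) ≤ 1 := by
  have hx0 : (0:ℝ) < x := by linarith
  have h3 : a ^ 2 + x ^ 2 ≤ 3 * x := by nlinarith [sq_nonneg (x - 0.4), sq_nonneg (1 - x)]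
  have hs : (a ^ 2 + x ^ 2) ^ 2 ≤ 9 * x ^ 2 := by nlinarith [sq_nonneg a, sq_nonneg x]
  have hx2 : x ^ 2 ≤ 1 := by nlinarith
  have hpos : (0:ℝ) < 9 * x ^ 2 := by positivity
  have key : (1 - x ^ 2) * (a ^ 2 + x ^ 2) ^ 2 / (9 * x ^ 2) ≤ 1 - x ^ 2 := by
    rw [div_le_iff₀ hpos]
    nlinarith [mul_le_mul_of_nonneg_left hs (by linarith : (0:ℝ) ≤ 1 - x ^ 2)]
  linarith
end

section
/- Let a ∈ (0,1), r ∈ (0,a), and define G(x) = x + √((4−a²+2arx−r²)/(a²−2arx+r²))·√(1−x²) for x ∈ [r/a, 1]. Then G(x) ≤ (r+2)/a for all x ∈ [r/a, 1], with equality at x₀ = (2r+a²+r²)/(2a(1+r)). -/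
/-!
Write `D = a² - 2arx + r²`, so that the numerator under the first root is `4 - D`. Clearing
denominators, `(r + 2 - a x)² D - a² (4 - D)(1 - x²)` is the perfect square
`(2a(1 + r)x - (2r + a² + r²))²`: the cubic terms cancel. Hence `G x ≤ (r + 2)/a` for every
`x ≤ 1`, with equality exactly where the square vanishes, i.e. at `x₀`.
-/

open Real

lemma add_sqrt_mul_sqrt_le {x c p q : ℝ} (hxc : x ≤ c) (h : p * q ≤ (c - x) ^ 2) :
    x + √p * √q ≤ c := by
  rcases le_or_gt 0 p with hp | hp
  · rw [← sqrt_mul hp]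
    linarith [sqrt_le_sqrt h, sqrt_sq (sub_nonneg.2 hxc)]
  · simpa [sqrt_eq_zero_of_nonpos hp.le] using hxc

lemma add_sqrt_mul_sqrt_eq {x c p q : ℝ} (hp : 0 ≤ p) (hxc : x ≤ c) (h : p * q = (c - x) ^ 2) :
    x + √p * √q = c := by
  rw [← sqrt_mul hp, h, sqrt_sq (sub_nonneg.2 hxc)]
  ring

lemma div_mul_one_sub_sq_eq {a r x : ℝ} (ha : a ≠ 0) (hD : a ^ 2 - 2 * a * r * x + r ^ 2 ≠ 0) :
    (4 - a ^ 2 + 2 * a * r * x - r ^ 2) / (a ^ 2 - 2 * a * r * x + r ^ 2) * (1 - x ^ 2) =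
      ((r + 2) / a - x) ^ 2 -
        (2 * a * (1 + r) * x - (2 * r + a ^ 2 + r ^ 2)) ^ 2 /
          (a ^ 2 * (a ^ 2 - 2 * a * r * x + r ^ 2)) := by
  rw [div_sub' ha, div_pow, eq_sub_iff_add_eq, div_mul_eq_mul_div,
    div_add_div _ _ hD (by positivity), div_eq_div_iff (by positivity) (by positivity)]
  ring

lemma sq_sub_two_mul_mul_add_sq_pos {a r x : ℝ} (hr : 0 < r) (hra : r < a) (hx : x ≤ 1) :
    0 < a ^ 2 - 2 * a * r * x + r ^ 2 := by
  nlinarith [mul_pos hr (hr.trans hra), sq_pos_of_pos (sub_pos.2 hra)]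

lemma le_add_two_div_of_le_one {a r x : ℝ} (hr : 0 < r) (hra : r < a) (ha1 : a < 1) (hx : x ≤ 1) :
    x ≤ (r + 2) / a := by
  rw [le_div_iff₀ (hr.trans hra)]
  nlinarith

theorem stmt_8 (a r : ℝ) (ha : 0 < r) (hra : r < a) (ha1 : a < 1)
    (G : ℝ → ℝ)
    (hG : ∀ x, G x = x + Real.sqrt ((4 - a ^ 2 + 2 * a * r * x - r ^ 2) /
        (a ^ 2 - 2 * a * r * x + r ^ 2)) * Real.sqrt (1 - x ^ 2)) :
    (∀ x ∈ Set.Icc (r / a) 1, G x ≤ (r + 2) / a) ∧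
      G ((2 * r + a ^ 2 + r ^ 2) / (2 * a * (1 + r))) = (r + 2) / a := by
  have ha0 : 0 < a := ha.trans hra
  constructor
  · rintro x ⟨-, hx1⟩
    have hD := sq_sub_two_mul_mul_add_sq_pos ha hra hx1
    rw [hG]
    refine add_sqrt_mul_sqrt_le (le_add_two_div_of_le_one ha hra ha1 hx1) ?_
    rw [div_mul_one_sub_sq_eq ha0.ne' hD.ne']
    exact sub_le_self _ (by positivity)
  · set x₀ := (2 * r + a ^ 2 + r ^ 2) / (2 * a * (1 + r))
    have hx₀ : 0 < x₀ := by positivity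
    have hx₀1 : x₀ ≤ 1 := by
      rw [div_le_one (by positivity)]
      nlinarith
    have hD := sq_sub_two_mul_mul_add_sq_pos ha hra hx₀1
    have hN : 0 ≤ 4 - a ^ 2 + 2 * a * r * x₀ - r ^ 2 := by
      nlinarith [mul_pos (mul_pos ha0 ha) hx₀]
    rw [hG]
    refine add_sqrt_mul_sqrt_eq (div_nonneg hN hD.le) (le_add_two_div_of_le_one ha hra ha1 hx₀1) ?_
    rw [div_mul_one_sub_sq_eq ha0.ne' hD.ne']
    have hroot : 2 * a * (1 + r) * x₀ - (2 * r + a ^ 2 + r ^ 2) = 0 := by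
      simp only [x₀]
      field_simp
      ring
    simp [hroot]
end

section
/- Let p be monic of degree 9 with zeros a, z_1,…,z_8 and critical points ζ_1,…,ζ_8 satisfying |ζ_j − a| ≥ 1 for all j. Writing r_k = |z_k − a|, one has ∏_{j=1}^{8}|ζ_j| ≤ (∏_{j=1}^{8}|ζ_j − a|)·(a² − 1 + (1/4)∑_{k=1}^{8}(|z_k|² − a²)/r_k²)⁴, provided the quantity a² − 1 + (1/4)∑_{k=1}^{8}(|z_k|² − a²)/r_k² is nonnegative. -/
/-!
Write `p = (X - a) q`. Then `p'(a) = q(a)` and `p''(a) = 2 q'(a)`, so comparing the logarithmic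
derivatives of `p' = 9 ∏ (X - ζ_j)` and of `q` at `a` gives `∑ 1/(a - ζ_j) = 2 ∑ 1/(a - z_k)`.
For real `a`, `(|w|² - a²)/|w - a|² = 1 - 2a Re 1/(a - w)`, which turns this into
`∑_j (|ζ_j|² - a²)/ρ_j² = 2 ∑_k (|z_k|² - a²)/r_k² - 8`. Since `ρ_j ≥ 1`, the numbers
`|ζ_j|²/ρ_j² ≤ a² + (|ζ_j|² - a²)/ρ_j²` have mean at most `S`, the bracket of the claim, and
AM–GM bounds their product by `S⁸`.
-/

open Polynomial Finset

theorem eval_derivative_prod_X_sub_C {K ι : Type*} [Field K] [DecidableEq ι] (s : Finset ι)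
    (w : ι → K) {x : K} (hx : ∀ i ∈ s, x ≠ w i) :
    eval x (derivative (∏ i ∈ s, (X - C (w i)))) =
      (∏ i ∈ s, (x - w i)) * ∑ i ∈ s, (x - w i)⁻¹ := by
  simp only [derivative_prod_finset, derivative_X_sub_C, mul_one, eval_finsetSum, eval_prod,
    eval_sub, eval_X, eval_C, mul_sum]
  refine sum_congr rfl fun i hi => ?_
  rw [← mul_prod_erase s (fun j => x - w j) hi, mul_comm (x - w i), mul_assoc,
    mul_inv_cancel₀ (sub_ne_zero.mpr (hx i hi)), mul_one]

theorem sum_inv_sub_critical_eq_two_mul_sum_inv_sub_root {K ι κ : Type*} [Field K]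
    [Fintype ι] [Fintype κ] {a c : K} {z : ι → K} {ζ : κ → K} (hz : ∀ k, z k ≠ a)
    (hderiv : derivative ((X - C a) * ∏ k, (X - C (z k))) = C c * ∏ j, (X - C (ζ j))) :
    ∑ j, (a - ζ j)⁻¹ = 2 * ∑ k, (a - z k)⁻¹ := by
  classical
  set q : K[X] := ∏ k, (X - C (z k))
  have hz' : ∀ k ∈ univ, a ≠ z k := fun k _ => (hz k).symm
  have hqa : ∏ k, (a - z k) ≠ 0 := prod_ne_zero_iff.mpr fun k hk => sub_ne_zero.mpr (hz' k hk)
  have hd1 : derivative ((X - C a) * q) = q + (X - C a) * derivative q := by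
    simp only [derivative_mul, derivative_X_sub_C, one_mul]
  have hp'a : c * ∏ j, (a - ζ j) = ∏ k, (a - z k) := by
    simpa [hd1, q, eval_prod] using congrArg (eval a) hderiv.symm
  have hζ : ∀ j ∈ univ, a ≠ ζ j := by
    have := right_ne_zero_of_mul (hp'a ▸ hqa : c * ∏ j, (a - ζ j) ≠ 0)
    exact fun j hj => sub_ne_zero.mp (prod_ne_zero_iff.mp this j hj)
  have hp''a : c * ((∏ j, (a - ζ j)) * ∑ j, (a - ζ j)⁻¹) =
      2 * ((∏ k, (a - z k)) * ∑ k, (a - z k)⁻¹) := by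
    have := congrArg (fun f => eval a (derivative f)) hderiv
    simp only [derivative_mul, derivative_C, zero_mul, zero_add] at this
    simpa [eval_derivative_prod_X_sub_C _ _ hζ, eval_derivative_prod_X_sub_C _ _ hz', q, two_mul]
      using this.symm
  apply mul_left_cancel₀ hqa
  linear_combination hp''a - (∑ j, (a - ζ j)⁻¹) * hp'a


theorem norm_sq_sub_sq_div_norm_sub_sq (a : ℝ) {w : ℂ} (hw : w ≠ a) :
    (‖w‖ ^ 2 - a ^ 2) / ‖w - a‖ ^ 2 = 1 - 2 * a * ((a - w)⁻¹).re := by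
  have hD : Complex.normSq (w - a) ≠ 0 := Complex.normSq_eq_zero.not.mpr (sub_ne_zero.mpr hw)
  have hD' : Complex.normSq (a - w) = Complex.normSq (w - a) := by
    rw [← Complex.normSq_neg, neg_sub]
  rw [Complex.sq_norm, Complex.sq_norm, Complex.inv_re, hD']
  field_simp
  simp only [Complex.normSq_apply, Complex.sub_re, Complex.sub_im, Complex.ofReal_re,
    Complex.ofReal_im]
  ring

theorem sum_norm_sq_sub_sq_div_norm_sub_sq {ι : Type*} [Fintype ι] (a : ℝ) {w : ι → ℂ}
    (hw : ∀ i, w i ≠ a) :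
    ∑ i, (‖w i‖ ^ 2 - a ^ 2) / ‖w i - a‖ ^ 2 =
      Fintype.card ι - 2 * a * (∑ i, ((a : ℂ) - w i)⁻¹).re := by
  simp [norm_sq_sub_sq_div_norm_sub_sq a (hw _), Complex.re_sum, mul_sum]

theorem prod_le_pow_card_of_sum_le {ι : Type*} [Fintype ι] {t : ι → ℝ} {S : ℝ}
    (ht : ∀ i, 0 ≤ t i) (hS : ∑ i, t i ≤ Fintype.card ι * S) :
    ∏ i, t i ≤ S ^ Fintype.card ι := by
  rcases isEmpty_or_nonempty ι with hι | hι
  · simp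
  set n := Fintype.card ι
  have hn : (0 : ℝ) < n := by exact_mod_cast Fintype.card_pos
  have amgm := Real.geom_mean_le_arith_mean_weighted univ (fun _ => (n : ℝ)⁻¹) t
    (fun _ _ => by positivity) (by simp [n, hn.ne']) (fun i _ => ht i)
  rw [← mul_sum, Real.finsetProd_rpow _ _ (fun i _ => ht i)] at amgm
  have hP : 0 ≤ ∏ i, t i := prod_nonneg fun i _ => ht i
  have hroot : (∏ i, t i) ^ (n : ℝ)⁻¹ ≤ S := by
    calc _ ≤ (n : ℝ)⁻¹ * ∑ i, t i := amgm
      _ ≤ (n : ℝ)⁻¹ * (n * S) := by gcongr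
      _ = S := by field_simp
  calc ∏ i, t i = ((∏ i, t i) ^ (n : ℝ)⁻¹) ^ n := by
        rw [← Real.rpow_natCast, ← Real.rpow_mul hP,
          inv_mul_cancel₀ hn.ne', Real.rpow_one]
    _ ≤ S ^ n := pow_le_pow_left₀ (Real.rpow_nonneg hP _) hroot n

theorem sq_div_norm_sub_sq_le {a : ℝ} {w : ℂ} (hw : 1 ≤ ‖w - a‖) :
    ‖w‖ ^ 2 / ‖w - a‖ ^ 2 ≤ a ^ 2 + (‖w‖ ^ 2 - a ^ 2) / ‖w - a‖ ^ 2 := by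
  have hρ : 1 ≤ ‖w - a‖ ^ 2 := one_le_pow₀ hw
  have : a ^ 2 / ‖w - a‖ ^ 2 ≤ a ^ 2 := div_le_self (sq_nonneg a) hρ
  rw [sub_div]
  linarith

theorem prod_norm_sq_le_of_one_le_norm_sub {ι : Type*} [Fintype ι] {a S : ℝ} {ζ : ι → ℂ}
    (hζ : ∀ j, 1 ≤ ‖ζ j - a‖)
    (hS : ∑ j, (‖ζ j‖ ^ 2 - a ^ 2) / ‖ζ j - a‖ ^ 2 ≤ Fintype.card ι * (S - a ^ 2)) :
    (∏ j, ‖ζ j‖) ^ 2 ≤ (∏ j, ‖ζ j - a‖) ^ 2 * S ^ Fintype.card ι := by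
  have hρ : ∀ j, ‖ζ j - a‖ ^ 2 ≠ 0 := fun j => by
    have := hζ j
    positivity
  have hsum : ∑ j, ‖ζ j‖ ^ 2 / ‖ζ j - a‖ ^ 2 ≤ Fintype.card ι * S := by
    calc _ ≤ ∑ j, (a ^ 2 + (‖ζ j‖ ^ 2 - a ^ 2) / ‖ζ j - a‖ ^ 2) :=
          sum_le_sum fun j _ => sq_div_norm_sub_sq_le (hζ j)
      _ ≤ Fintype.card ι * S := by
          rw [sum_add_distrib, sum_const, card_univ, nsmul_eq_mul]
          linarith
  have hprod := prod_le_pow_card_of_sum_le (fun j => by positivity) hsum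
  calc (∏ j, ‖ζ j‖) ^ 2 = (∏ j, ‖ζ j‖ ^ 2 / ‖ζ j - a‖ ^ 2) * (∏ j, ‖ζ j - a‖) ^ 2 := by
        rw [← prod_pow, ← prod_pow, ← prod_mul_distrib]
        exact prod_congr rfl fun j _ => (div_mul_cancel₀ _ (hρ j)).symm
    _ ≤ (∏ j, ‖ζ j - a‖) ^ 2 * S ^ Fintype.card ι := by
        rw [mul_comm]
        gcongr

theorem stmt_19_general (a : ℝ)
    (z ζ : Fin 8 → ℂ) (p : Polynomial ℂ)
    (hp : p = (X - C (a : ℂ)) * ∏ k, (X - C (z k)))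
    (hp' : derivative p = C (9 : ℂ) * ∏ j, (X - C (ζ j)))
    (hzne : ∀ k, z k ≠ (a : ℂ))
    (hζ : ∀ j, 1 ≤ ‖ζ j - a‖)
    (r : Fin 8 → ℝ) (hr : ∀ k, r k = ‖z k - a‖)
    (hpos : 0 ≤ a ^ 2 - 1 + (1 / 4) * ∑ k, (‖z k‖ ^ 2 - a ^ 2) / (r k) ^ 2) :
    (∏ j, ‖ζ j‖) ≤
      (∏ j, ‖ζ j - a‖) *
        (a ^ 2 - 1 + (1 / 4) * ∑ k, (‖z k‖ ^ 2 - a ^ 2) / (r k) ^ 2) ^ 4 := by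
  have hζne : ∀ j, ζ j ≠ a := fun j h => absurd (hζ j) (by simp [h])
  have hcrit := sum_inv_sub_critical_eq_two_mul_sum_inv_sub_root hzne (hp ▸ hp')
  have hsum : ∑ j, (‖ζ j‖ ^ 2 - a ^ 2) / ‖ζ j - a‖ ^ 2 =
      2 * ∑ k, (‖z k‖ ^ 2 - a ^ 2) / (r k) ^ 2 - 8 := by
    simp only [hr, sum_norm_sq_sub_sq_div_norm_sub_sq a hζne,
      sum_norm_sq_sub_sq_div_norm_sub_sq a hzne, hcrit]
    simp only [Fintype.card_fin, Nat.cast_ofNat, Complex.mul_re, Complex.re_ofNat,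
      Complex.im_ofNat, zero_mul, sub_zero]
    ring
  have hsq := prod_norm_sq_le_of_one_le_norm_sub hζ
    (S := a ^ 2 - 1 + (1 / 4) * ∑ k, (‖z k‖ ^ 2 - a ^ 2) / (r k) ^ 2) (by simp [hsum]; linarith)
  rw [← pow_le_pow_iff_left₀ (by positivity)
    (mul_nonneg (by positivity) (pow_nonneg hpos 4)) two_ne_zero]
  simpa [mul_pow, ← pow_mul] using hsq

theorem stmt_19 (a : ℝ) (ha0 : 0 < a) (ha1 : a < 1)
    (z ζ : Fin 8 → ℂ) (p : Polynomial ℂ)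
    (hp : p = (X - C (a : ℂ)) * ∏ k, (X - C (z k)))
    (hp' : derivative p = C (9 : ℂ) * ∏ j, (X - C (ζ j)))
    (hzne : ∀ k, z k ≠ (a : ℂ))
    (hζ : ∀ j, 1 ≤ ‖ζ j - a‖)
    (r : Fin 8 → ℝ) (hr : ∀ k, r k = ‖z k - a‖)
    (hpos : 0 ≤ a ^ 2 - 1 + (1 / 4) * ∑ k, (‖z k‖ ^ 2 - a ^ 2) / (r k) ^ 2) :
    (∏ j, ‖ζ j‖) ≤
      (∏ j, ‖ζ j - a‖) *
        (a ^ 2 - 1 + (1 / 4) * ∑ k, (‖z k‖ ^ 2 - a ^ 2) / (r k) ^ 2) ^ 4 :=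
  stmt_19_general a z ζ p hp hp' hzne hζ r hr hpos
end
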